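/- arXiv:math/0310010 — 3 statements merged into one kernel-verified Lean document; each statement's English description precedes it below -/
import Mathlib

section
/- Let (𝒰, ρ) be a metric space, ρ'(x,y) = min{1, ρ(x,y)}, and let dist and dist_{ρ'} be the Hausdorff metrics on nonempty closed bounded sets corresponding to ρ and ρ' respectively. Then for all nonempty closed bounded sets A, B ⊆ 𝒰: min{1, dist(A,B)} = dist_{ρ'}(A,B). -/
/-- The Hausdorff "distance" between two sets built from a distance function `d`. -/
noncomputable def hDistOf {U : Type*} (d : U → U → ℝ) (A B : Set U) : ℝ :=
  max (⨆ x : A, ⨅ y : B, d x.1 y.1) (⨆ y : B, ⨅ x : A, d x.1 y.1)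

theorem min_one_iSup_iInf {α β : Type*} [Nonempty α] [Nonempty β]
    (f : α → β → ℝ) (C : ℝ) (h0 : ∀ a b, 0 ≤ f a b) (hC : ∀ a b, f a b ≤ C) :
    min 1 (⨆ a, ⨅ b, f a b) = ⨆ a, ⨅ b, min 1 (f a b) := by
  have hmono : Monotone (fun t : ℝ => min 1 t) := fun a b h => min_le_min le_rfl h
  have hcont : Continuous fun t : ℝ => min 1 t := continuous_const.min continuous_id
  have hbdd : ∀ a, BddBelow (Set.range fun b => f a b) := by
    intro a; exact ⟨0, by rintro _ ⟨b, rfl⟩; exact h0 a b⟩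
  have hbdd2 : BddAbove (Set.range fun a => ⨅ b, f a b) := by
    refine ⟨C, ?_⟩
    rintro _ ⟨a, rfl⟩
    exact ciInf_le_of_le (hbdd a) (Classical.arbitrary β) (hC a _)
  rw [hmono.map_ciSup_of_continuousAt hcont.continuousAt hbdd2]
  congr 1; ext a
  rw [hmono.map_ciInf_of_continuousAt hcont.continuousAt (hbdd a)]

theorem stmt4 {U : Type*} [MetricSpace U] (A B : Set U)
    (hAne : A.Nonempty) (hAcl : IsClosed A) (hAbd : Bornology.IsBounded A)
    (hBne : B.Nonempty) (hBcl : IsClosed B) (hBbd : Bornology.IsBounded B) :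
    min 1 (hDistOf (fun x y => dist x y) A B) =
      hDistOf (fun x y => min 1 (dist x y)) A B := by
  obtain ⟨C, hC⟩ := Metric.isBounded_iff.mp (hAbd.union hBbd)
  have hC' : ∀ a ∈ A, ∀ b ∈ B, dist a b ≤ C := fun a ha b hb => hC (Or.inl ha) (Or.inr hb)
  haveI : Nonempty A := hAne.to_subtype
  haveI : Nonempty B := hBne.to_subtype
  unfold hDistOf
  rw [min_max_distrib_left,
    min_one_iSup_iInf (fun (x : A) (y : B) => dist x.1 y.1) C
      (fun a b => dist_nonneg) (fun a b => hC' _ a.2 _ b.2),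
    min_one_iSup_iInf (fun (y : B) (x : A) => dist x.1 y.1) C
      (fun a b => dist_nonneg) (fun b a => by simpa [dist_comm] using hC' _ a.2 _ b.2)]
end

section
/- Let 𝒰 be a complete metric space. A function f : ℝ → 𝒰 belongs to W(ℝ, 𝒰) (is equi-Weyl almost periodic with respect to the truncated metric ρ' = min{1,ρ}) if and only if for all ε > 0 and δ > 0 there exists l > 0 such that the set of τ ∈ ℝ satisfying sup_{ξ∈ℝ} meas{t ∈ [ξ, ξ+l] : ρ(f(t), f(t+τ)) ≥ δ} < ε·l is relatively dense in ℝ. -/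
/-!
Both conditions compare the mean of `min 1 ρ(f t, f (t + τ))` over windows of length `l` with the
proportion of each window on which `ρ(f t, f (t + τ)) ≥ δ`. Markov's inequality bounds the
proportion by the mean divided by `min δ 1`; conversely, splitting a window into the part where
the distance is at least `δ` (where the integrand is at most `1`) and its complement (where it is
below `δ`) bounds the mean by the proportion plus `δ`. Both bounds are uniform in the window, so
they pass to the suprema, and a translation `τ` good for one condition is good for the other.
-/

open MeasureTheory

/-- A set `T ⊆ ℝ` is relatively dense. -/
def RelDense (T : Set ℝ) : Prop :=
  ∃ a > (0 : ℝ), ∀ ξ : ℝ, ∃ τ ∈ T, ξ ≤ τ ∧ τ ≤ ξ + a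

open Set

lemma RelDense.mono {S T : Set ℝ} (h : RelDense S) (hST : S ⊆ T) : RelDense T := by
  obtain ⟨a, ha, h⟩ := h
  exact ⟨a, ha, fun ξ => let ⟨τ, hτ, h₁, h₂⟩ := h ξ; ⟨τ, hST hτ, h₁, h₂⟩⟩

lemma ciSup_lt_of_le_mul_add {ι : Type*} [Nonempty ι] {a b : ι → ℝ} {c d e : ℝ}
    (hb : BddAbove (range b)) (hc : 0 ≤ c) (hab : ∀ i, a i ≤ c * b i + d)
    (he : c * (⨆ i, b i) + d < e) : ⨆ i, a i < e :=
  (ciSup_le fun i => (hab i).trans (add_le_add_left (mul_le_mul_of_nonneg_left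
    (le_ciSup hb i) hc) d)).trans_lt he

section FiniteMeasure

variable {α : Type*} [MeasurableSpace α] {μ : Measure α} [IsFiniteMeasure μ] {g : α → ℝ}

lemma integrable_min_one (hg : AEMeasurable g μ) (hg0 : ∀ x, 0 ≤ g x) :
    Integrable (fun x => min 1 (g x)) μ :=
  .of_bound (aemeasurable_const.min hg).aestronglyMeasurable 1 <| ae_of_all _ fun x => by
    rw [Real.norm_of_nonneg (le_min zero_le_one (hg0 x))]
    exact min_le_left _ _

lemma mul_measureReal_le_integral_min_one (hg : AEMeasurable g μ) (hg0 : ∀ x, 0 ≤ g x)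
    {δ : ℝ} (hδ0 : 0 ≤ δ) (hδ1 : δ ≤ 1) :
    δ * μ.real {x | δ ≤ g x} ≤ ∫ x, min 1 (g x) ∂μ :=
  calc δ * μ.real {x | δ ≤ g x} ≤ δ * μ.real {x | δ ≤ min 1 (g x)} := by
        gcongr 1
        exact measureReal_mono fun x hx => le_min hδ1 hx
    _ ≤ ∫ x, min 1 (g x) ∂μ :=
        mul_meas_ge_le_integral_of_nonneg (ae_of_all _ fun x => le_min zero_le_one (hg0 x))
          (integrable_min_one hg hg0) δ

lemma integral_min_one_le (hg : AEMeasurable g μ) (hg0 : ∀ x, 0 ≤ g x) {δ : ℝ} (hδ : 0 ≤ δ) :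
    ∫ x, min 1 (g x) ∂μ ≤ μ.real {x | δ ≤ g x} + δ * μ.real univ := by
  set S := {x | δ ≤ g x}
  have hS : NullMeasurableSet S μ := nullMeasurableSet_le aemeasurable_const hg
  have hpt : ∀ x, min 1 (g x) ≤ S.indicator 1 x + δ := by
    intro x
    by_cases hx : x ∈ S
    · rw [indicator_of_mem hx, Pi.one_apply]
      linarith [min_le_left 1 (g x)]
    · rw [indicator_of_notMem hx, zero_add]
      exact (min_le_right _ _).trans (not_le.1 hx).le
  have hind : Integrable (S.indicator 1) μ := (integrable_const (1 : ℝ)).indicator₀ hS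
  calc ∫ x, min 1 (g x) ∂μ ≤ ∫ x, (S.indicator 1 x + δ) ∂μ :=
        integral_mono (integrable_min_one hg hg0) (hind.add (integrable_const δ)) hpt
    _ = μ.real S + δ * μ.real univ := by
        rw [integral_add hind (integrable_const δ), integral_indicator₀ hS, Pi.one_def,
          integral_const, integral_const, measureReal_restrict_apply_univ, smul_eq_mul,
          smul_eq_mul, mul_one, mul_comm]

end FiniteMeasure

section Interval

variable {g : ℝ → ℝ} {l δ ε : ℝ}

lemma intervalIntegral_eq_integral_restrict_Icc (h : ℝ → ℝ) (ξ : ℝ) (hl : 0 ≤ l) :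
    ∫ t in ξ..ξ + l, h t = ∫ t in Icc ξ (ξ + l), h t := by
  rw [intervalIntegral.integral_of_le (by linarith), integral_Icc_eq_integral_Ioc]

lemma volume_sep_Icc_ne_top (p : ℝ → Prop) (a b : ℝ) : volume {t ∈ Icc a b | p t} ≠ ⊤ :=
  measure_ne_top_of_subset (fun _ ht => ht.1) measure_Icc_lt_top.ne

lemma volume_real_sep_Icc_le (p : ℝ → Prop) (ξ : ℝ) (hl : 0 ≤ l) :
    volume.real {t ∈ Icc ξ (ξ + l) | p t} ≤ l :=
  (measureReal_mono (fun _ ht => ht.1) measure_Icc_lt_top.ne).trans_eq <| by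
    simp [Real.volume_real_Icc, hl]

lemma mul_volume_real_sep_Icc_le (hg : AEMeasurable g) (hg0 : ∀ t, 0 ≤ g t) (ξ : ℝ)
    (hl : 0 ≤ l) (hδ0 : 0 ≤ δ) (hδ1 : δ ≤ 1) :
    δ * volume.real {t ∈ Icc ξ (ξ + l) | δ ≤ g t} ≤ ∫ t in ξ..ξ + l, min 1 (g t) := by
  have := mul_measureReal_le_integral_min_one (μ := volume.restrict (Icc ξ (ξ + l)))
    hg.restrict hg0 hδ0 hδ1
  rwa [measureReal_restrict_apply' measurableSet_Icc, inter_comm,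
    ← intervalIntegral_eq_integral_restrict_Icc _ ξ hl] at this

lemma intervalIntegral_min_one_le (hg : AEMeasurable g) (hg0 : ∀ t, 0 ≤ g t) (ξ : ℝ)
    (hl : 0 ≤ l) (hδ : 0 ≤ δ) :
    ∫ t in ξ..ξ + l, min 1 (g t) ≤ volume.real {t ∈ Icc ξ (ξ + l) | δ ≤ g t} + δ * l := by
  have := integral_min_one_le (μ := volume.restrict (Icc ξ (ξ + l))) hg.restrict hg0 hδ
  rwa [measureReal_restrict_apply' measurableSet_Icc, inter_comm,
    measureReal_restrict_apply_univ, Real.volume_real_Icc, add_sub_cancel_left, max_eq_left hl,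
    ← intervalIntegral_eq_integral_restrict_Icc _ ξ hl] at this

lemma one_div_mul_intervalIntegral_min_one_le_one (ξ : ℝ) (hl : 0 < l) (hg0 : ∀ t, 0 ≤ g t) :
    (1 / l) * ∫ t in ξ..ξ + l, min 1 (g t) ≤ 1 := by
  have := intervalIntegral.norm_integral_le_of_norm_le_const (a := ξ) (b := ξ + l) (C := 1)
    (f := fun t => min 1 (g t)) fun t _ => by
      rw [Real.norm_of_nonneg (le_min zero_le_one (hg0 t))]
      exact min_le_left _ _
  rw [add_sub_cancel_left, abs_of_pos hl, one_mul] at this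
  rw [div_mul_eq_mul_div, one_mul, div_le_one hl]
  exact (le_abs_self _).trans this

lemma iSup_volume_real_lt_of_iSup_mean_lt (hg : AEMeasurable g) (hg0 : ∀ t, 0 ≤ g t) (hl : 0 < l)
    (hδ : 0 < δ) (h : ⨆ ξ : ℝ, (1 / l) * ∫ t in ξ..ξ + l, min 1 (g t) < ε * min δ 1) :
    ⨆ ξ : ℝ, volume.real {t ∈ Icc ξ (ξ + l) | δ ≤ g t} < ε * l := by
  have hδ' : 0 < min δ 1 := lt_min hδ one_pos
  refine ciSup_lt_of_le_mul_add (c := l / min δ 1) (d := 0)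
    ⟨1, forall_mem_range.2 fun ξ => one_div_mul_intervalIntegral_min_one_le_one ξ hl hg0⟩
    (by positivity)
    (fun ξ => ?_) ?_
  · calc volume.real {t ∈ Icc ξ (ξ + l) | δ ≤ g t}
        ≤ volume.real {t ∈ Icc ξ (ξ + l) | min δ 1 ≤ g t} :=
          measureReal_mono (fun t ht => ⟨ht.1, (min_le_left _ _).trans ht.2⟩)
            (volume_sep_Icc_ne_top _ _ _)
      _ ≤ (1 / min δ 1) * ∫ t in ξ..ξ + l, min 1 (g t) := by
          rw [one_div_mul_eq_div, le_div_iff₀' hδ']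
          exact mul_volume_real_sep_Icc_le hg hg0 ξ hl.le hδ'.le (min_le_right _ _)
      _ = l / min δ 1 * ((1 / l) * ∫ t in ξ..ξ + l, min 1 (g t)) + 0 := by
          rw [add_zero]
          field_simp
  · calc l / min δ 1 * (⨆ ξ : ℝ, (1 / l) * ∫ t in ξ..ξ + l, min 1 (g t)) + 0
        < l / min δ 1 * (ε * min δ 1) := by rw [add_zero]; gcongr
      _ = ε * l := by field_simp

lemma iSup_mean_lt_of_iSup_volume_real_lt (hg : AEMeasurable g) (hg0 : ∀ t, 0 ≤ g t) (hl : 0 < l)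
    (hε : 0 < ε) (h : ⨆ ξ : ℝ, volume.real {t ∈ Icc ξ (ξ + l) | ε / 2 ≤ g t} < ε / 2 * l) :
    ⨆ ξ : ℝ, (1 / l) * ∫ t in ξ..ξ + l, min 1 (g t) < ε := by
  refine ciSup_lt_of_le_mul_add (c := 1 / l) (d := ε / 2)
    (b := fun ξ => volume.real {t ∈ Icc ξ (ξ + l) | ε / 2 ≤ g t})
    ⟨l, forall_mem_range.2 fun ξ => volume_real_sep_Icc_le _ ξ hl.le⟩ (by positivity)
    (fun ξ => ?_) ?_
  · calc (1 / l) * ∫ t in ξ..ξ + l, min 1 (g t)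
        ≤ (1 / l) * (volume.real {t ∈ Icc ξ (ξ + l) | ε / 2 ≤ g t} + ε / 2 * l) := by
          gcongr
          exact intervalIntegral_min_one_le hg hg0 ξ hl.le (by positivity)
      _ = _ := by field_simp
  · have hmean : (1 / l) * (⨆ ξ : ℝ, volume.real {t ∈ Icc ξ (ξ + l) | ε / 2 ≤ g t}) < ε / 2 := by
      rwa [one_div_mul_eq_div, div_lt_iff₀ hl]
    linarith

end Interval

theorem stmt7_general {U : Type*} [MetricSpace U]
    (f : ℝ → U) (hf : AEStronglyMeasurable f volume) :
    (∀ ε > (0 : ℝ), ∃ l > (0 : ℝ), RelDense {τ : ℝ |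
        (⨆ ξ : ℝ, (1 / l) * ∫ t in ξ..(ξ + l), min 1 (dist (f t) (f (t + τ)))) < ε}) ↔
    (∀ ε > (0 : ℝ), ∀ δ > (0 : ℝ), ∃ l > (0 : ℝ), RelDense {τ : ℝ |
        (⨆ ξ : ℝ,
            (volume {t ∈ Set.Icc ξ (ξ + l) | δ ≤ dist (f t) (f (t + τ))}).toReal)
          < ε * l}) := by
  have hg : ∀ τ, AEMeasurable fun t => dist (f t) (f (t + τ)) := fun τ =>
    (hf.dist (hf.comp_measurePreserving (measurePreserving_add_right volume τ))).aemeasurable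
  constructor
  · intro H ε hε δ hδ
    obtain ⟨l, hl, hT⟩ := H (ε * min δ 1) (by positivity)
    exact ⟨l, hl, hT.mono fun τ hτ =>
      iSup_volume_real_lt_of_iSup_mean_lt (hg τ) (fun _ => dist_nonneg) hl hδ hτ⟩
  · intro H ε hε
    obtain ⟨l, hl, hT⟩ := H (ε / 2) (by positivity) (ε / 2) (by positivity)
    exact ⟨l, hl, hT.mono fun τ hτ =>
      iSup_mean_lt_of_iSup_volume_real_lt (hg τ) (fun _ => dist_nonneg) hl hε hτ⟩

theorem stmt7 {U : Type*} [MetricSpace U] [CompleteSpace U]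
    (f : ℝ → U) (hf : AEStronglyMeasurable f volume) :
    (∀ ε > (0 : ℝ), ∃ l > (0 : ℝ), RelDense {τ : ℝ |
        (⨆ ξ : ℝ, (1 / l) * ∫ t in ξ..(ξ + l), min 1 (dist (f t) (f (t + τ)))) < ε}) ↔
    (∀ ε > (0 : ℝ), ∀ δ > (0 : ℝ), ∃ l > (0 : ℝ), RelDense {τ : ℝ |
        (⨆ ξ : ℝ,
            (volume {t ∈ Set.Icc ξ (ξ + l) | δ ≤ dist (f t) (f (t + τ))}).toReal)
          < ε * l}) :=
  stmt7_general f hf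
end

section
/- Let 𝒰 be a complete metric space and f ∈ W(ℝ, 𝒰) equi-Weyl almost periodic (with respect to the truncated metric min{1,ρ}). Then for any ε > 0 and δ > 0 there exist l > 0 and finitely many points x₁, …, x_N ∈ 𝒰 such that sup_{ξ∈ℝ} meas{t ∈ [ξ, ξ+l] : ρ(f(t), {x₁,…,x_N}) ≥ δ} < ε·l. -/
/-!
Separability of the essential range of `f` gives finitely many points whose `δ/2`-balls
capture `f(t)` for all `t` in the fixed window `[0, l + a]` outside a set of measure `< εl/4`.
Any window `[ξ, ξ + l]` is moved into `[0, l + a]` by an `(εc/4, D_l)`-almost period `τ`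
with `ξ + τ ∈ [0, a]`, and by Markov's inequality `f(t)` lies within `c = min 1 (δ/2)` of
`f(t + τ)` outside a set of measure `< εl/4`; the triangle inequality then places `f(t)`
within `δ` of the finite set except on a set of measure `≤ εl/2`.
-/

open MeasureTheory

/-- `f ∈ W(ℝ,𝒰)`: equi-Weyl almost periodic w.r.t. the truncated metric `min 1 ρ`. -/
def WAP {U : Type*} [MetricSpace U] (f : ℝ → U) : Prop :=
  AEStronglyMeasurable f volume ∧
    ∀ ε > (0 : ℝ), ∃ l > (0 : ℝ), RelDense {τ : ℝ |
      (⨆ ξ : ℝ, (1 / l) * ∫ t in ξ..(ξ + l), min 1 (dist (f t) (f (t + τ)))) < ε}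

open Set Filter Topology
open scoped ENNReal

namespace MeasureTheory

variable {α U : Type*} [MeasurableSpace α] [Nonempty α] [PseudoMetricSpace U] {μ : Measure α}
  [IsFiniteMeasure μ] {f : α → U} {r : ℝ} {η : ℝ≥0∞}

theorem StronglyMeasurable.exists_finset_measure_setOf_forall_le_dist_lt
    (hf : StronglyMeasurable f) (hr : 0 < r) (hη : 0 < η) :
    ∃ s : Finset U, s.Nonempty ∧ μ {t | ∀ x ∈ s, r ≤ dist (f t) x} < η := by
  classical
  obtain ⟨c, hc, hfc⟩ := hf.isSeparable_range
  obtain ⟨u, rfl⟩ := hc.exists_eq_range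
    (closure_nonempty_iff.1 ((range_nonempty f).mono hfc))
  set F : ℕ → Set α := fun N ↦ {t | ∀ n ≤ N, r ≤ dist (f t) (u n)}
  have hF_meas (N : ℕ) : MeasurableSet (F N) := by
    simp only [F, ofPred_forall]
    exact .iInter fun n ↦ .iInter fun _ ↦
      measurableSet_le stronglyMeasurable_const (hf.dist stronglyMeasurable_const)
  have hF_anti : Antitone F := fun M N hMN t ht n hn ↦ ht n (hn.trans hMN)
  have hF_empty : ⋂ N, F N = ∅ := by
    refine eq_empty_of_forall_notMem fun t ht ↦ ?_
    obtain ⟨_, ⟨n, rfl⟩, hn⟩ := Metric.mem_closure_iff.1 (hfc (mem_range_self t)) r hr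
    exact (mem_iInter.1 ht n n le_rfl).not_gt hn
  have h_tendsto : Tendsto (fun N ↦ μ (F N)) atTop (𝓝 0) := by
    have := tendsto_measure_iInter_atTop (fun N ↦ (hF_meas N).nullMeasurableSet) hF_anti
      ⟨0, measure_ne_top μ _⟩
    rwa [hF_empty, measure_empty] at this
  obtain ⟨N, hN⟩ := (h_tendsto.eventually (gt_mem_nhds hη)).exists
  refine ⟨(Finset.range (N + 1)).image u, by simp, ?_⟩
  convert hN using 3
  simp

theorem AEStronglyMeasurable.exists_finset_measure_setOf_forall_le_dist_lt
    (hf : AEStronglyMeasurable f μ) (hr : 0 < r) (hη : 0 < η) :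
    ∃ s : Finset U, s.Nonempty ∧ μ {t | ∀ x ∈ s, r ≤ dist (f t) x} < η := by
  obtain ⟨s, hs, hμs⟩ :=
    hf.stronglyMeasurable_mk.exists_finset_measure_setOf_forall_le_dist_lt (μ := μ) hr hη
  refine ⟨s, hs, lt_of_eq_of_lt (measure_congr ?_) hμs⟩
  filter_upwards [hf.ae_eq_mk] with t ht
  exact congrArg (fun y ↦ ∀ x ∈ s, r ≤ dist y x) ht

end MeasureTheory

theorem setOf_forall_le_dist_subset_union {β U : Type*} [PseudoMetricSpace U] (f g : β → U)
    (J : Set β) (s : Finset U) {r₁ r₂ r : ℝ} (h : r₁ + r₂ ≤ r) :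
    {t ∈ J | ∀ x ∈ s, r ≤ dist (f t) x} ⊆
      {t ∈ J | r₁ ≤ dist (f t) (g t)} ∪ {t ∈ J | ∀ x ∈ s, r₂ ≤ dist (g t) x} := by
  rintro t ⟨htJ, hfar⟩
  by_contra! hnot
  obtain ⟨hclose, x, hx, hgx⟩ : dist (f t) (g t) < r₁ ∧ ∃ x ∈ s, dist (g t) x < r₂ := by
    simpa [htJ] using hnot
  linarith [hfar x hx, dist_triangle (f t) (g t) x]

theorem Real.volume_sep_Icc_comp_add_right_le_restrict (p : ℝ → Prop) {a b τ a' b' : ℝ}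
    (ha : a' ≤ a + τ) (hb : b + τ ≤ b') :
    volume {t ∈ Icc a b | p (t + τ)} ≤ volume.restrict (Icc a' b') {t | p t} := by
  have hsub : {t ∈ Icc a b | p (t + τ)} ⊆ (· + τ) ⁻¹' ({t | p t} ∩ Icc a' b') :=
    fun t ht ↦ ⟨ht.2, by linarith [ht.1.1], by linarith [ht.1.2]⟩
  exact (measure_mono hsub).trans
    ((measure_preimage_add_right volume τ _).trans_le (Measure.le_restrict_apply _ _))

theorem integral_le_mul_iSup_average {g : ℝ → ℝ} {C l : ℝ} (hg : ∀ t, ‖g t‖ ≤ C) (hl : 0 < l)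
    (ξ : ℝ) : ∫ t in ξ..ξ + l, g t ≤ l * ⨆ ξ', (1 / l) * ∫ t in ξ'..ξ' + l, g t := by
  have hbdd : BddAbove (range fun ξ' ↦ (1 / l) * ∫ t in ξ'..ξ' + l, g t) := by
    refine ⟨C, forall_mem_range.2 fun ξ' ↦ ?_⟩
    have := intervalIntegral.norm_integral_le_of_norm_le_const (a := ξ') (b := ξ' + l)
      fun t _ ↦ hg t
    rw [add_sub_cancel_left, abs_of_pos hl] at this
    rw [one_div, inv_mul_le_iff₀ hl, mul_comm]
    exact (le_abs_self _).trans ((Real.norm_eq_abs _).symm.trans_le this)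
  calc ∫ t in ξ..ξ + l, g t = l * ((1 / l) * ∫ t in ξ..ξ + l, g t) := by field_simp
    _ ≤ l * ⨆ ξ', (1 / l) * ∫ t in ξ'..ξ' + l, g t := by gcongr; exact le_ciSup hbdd ξ

theorem volume_le_dist_le_ofReal_integral_min_one_dist {U : Type*} [PseudoMetricSpace U]
    {f g : ℝ → U} (hf : AEStronglyMeasurable f volume) (hg : AEStronglyMeasurable g volume)
    {a b c : ℝ} (hab : a ≤ b) (hc : 0 < c) (hc₁ : c ≤ 1) :
    volume {t ∈ Icc a b | c ≤ dist (f t) (g t)} ≤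
      ENNReal.ofReal ((∫ t in a..b, min 1 (dist (f t) (g t))) / c) := by
  set h : ℝ → ℝ := fun t ↦ min 1 (dist (f t) (g t))
  set μ := volume.restrict (Icc a b)
  have h_nonneg : ∀ t, 0 ≤ h t := fun t ↦ le_min zero_le_one dist_nonneg
  have h_int : Integrable h μ := by
    refine Measure.integrableOn_of_bounded (M := 1) (by simp) ?_ (ae_of_all _ fun t ↦ ?_)
    · exact aestronglyMeasurable_const.inf (hf.dist hg)
    · rw [Real.norm_of_nonneg (h_nonneg t)]; exact min_le_left _ _
  have markov := mul_meas_ge_le_integral_of_nonneg (ae_of_all μ h_nonneg) h_int c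
  rw [integral_Icc_eq_integral_Ioc, ← intervalIntegral.integral_of_le hab, mul_comm,
    ← le_div_iff₀ hc] at markov
  calc volume {t ∈ Icc a b | c ≤ dist (f t) (g t)} ≤ μ {t | c ≤ h t} := by
        have hsub : {t ∈ Icc a b | c ≤ dist (f t) (g t)} ⊆ {t | c ≤ h t} ∩ Icc a b :=
          fun t ht ↦ ⟨le_min hc₁ ht.2, ht.1⟩
        exact (measure_mono hsub).trans (Measure.le_restrict_apply _ _)
    _ = ENNReal.ofReal (μ.real {t | c ≤ h t}) := (ofReal_measureReal (measure_ne_top _ _)).symm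
    _ ≤ _ := ENNReal.ofReal_le_ofReal markov

theorem volume_le_dist_comp_add_le_ofReal_iSup {U : Type*} [PseudoMetricSpace U] {f : ℝ → U}
    (hf : AEStronglyMeasurable f volume) {l c : ℝ} (hl : 0 < l) (hc : 0 < c) (hc₁ : c ≤ 1)
    (τ ξ : ℝ) :
    volume {t ∈ Icc ξ (ξ + l) | c ≤ dist (f t) (f (t + τ))} ≤ ENNReal.ofReal
      (l / c * ⨆ ξ', (1 / l) * ∫ t in ξ'..ξ' + l, min 1 (dist (f t) (f (t + τ)))) := by
  have hf_shift : AEStronglyMeasurable (fun t ↦ f (t + τ)) volume :=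
    hf.comp_quasiMeasurePreserving (measurePreserving_add_right volume τ).quasiMeasurePreserving
  have h_bound (t : ℝ) : ‖min 1 (dist (f t) (f (t + τ)))‖ ≤ 1 := by
    rw [Real.norm_of_nonneg (le_min zero_le_one dist_nonneg)]
    exact min_le_left _ _
  refine (volume_le_dist_le_ofReal_integral_min_one_dist hf hf_shift (by linarith) hc hc₁).trans
    (ENNReal.ofReal_le_ofReal ?_)
  rw [div_mul_eq_mul_div]
  gcongr
  exact integral_le_mul_iSup_average h_bound hl ξ

theorem stmt9_general {U : Type*} [MetricSpace U]
    (f : ℝ → U) (hf : WAP f) :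
    ∀ ε > (0 : ℝ), ∀ δ > (0 : ℝ), ∃ l > (0 : ℝ), ∃ s : Finset U, s.Nonempty ∧
      (⨆ ξ : ℝ,
          (volume {t ∈ Set.Icc ξ (ξ + l) | ∀ x ∈ s, δ ≤ dist (f t) x}).toReal)
        < ε * l := by
  intro ε hε δ hδ
  obtain ⟨hf_meas, hf_ap⟩ := hf
  -- Markov's inequality only sees the truncated metric `min 1 ρ`, hence a threshold `≤ 1`.
  set c := min 1 (δ / 2)
  have hc : 0 < c := by positivity
  obtain ⟨l, hl, a, -, hτ_dense⟩ := hf_ap (ε * c / 4) (by positivity)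
  obtain ⟨s, hs, h_net⟩ := AEStronglyMeasurable.exists_finset_measure_setOf_forall_le_dist_lt
    (hf_meas.restrict (s := Icc 0 (l + a))) (half_pos hδ)
    (ENNReal.ofReal_pos.2 (by positivity : 0 < ε * l / 4))
  refine ⟨l, hl, s, hs, ?_⟩
  suffices h : ∀ ξ, (volume {t ∈ Icc ξ (ξ + l) | ∀ x ∈ s, δ ≤ dist (f t) x}).toReal ≤
      ε * l / 4 + ε * l / 4 from
    (Real.iSup_le h (by positivity)).trans_lt (by linarith [mul_pos hε hl])
  intro ξ
  obtain ⟨τ, hτ, hτ₁, hτ₂⟩ := hτ_dense (-ξ)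
  have h_close : volume {t ∈ Icc ξ (ξ + l) | c ≤ dist (f t) (f (t + τ))} ≤
      ENNReal.ofReal (ε * l / 4) := by
    refine (volume_le_dist_comp_add_le_ofReal_iSup hf_meas hl hc (min_le_left _ _) τ ξ).trans
      (ENNReal.ofReal_le_ofReal ?_)
    calc _ ≤ l / c * (ε * c / 4) := by gcongr; exact le_of_lt hτ
      _ = ε * l / 4 := by field_simp
  have h_far : volume {t ∈ Icc ξ (ξ + l) | ∀ x ∈ s, δ / 2 ≤ dist (f (t + τ)) x} ≤
      ENNReal.ofReal (ε * l / 4) :=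
    (Real.volume_sep_Icc_comp_add_right_le_restrict (fun r ↦ ∀ x ∈ s, δ / 2 ≤ dist (f r) x)
      (by linarith) (by linarith)).trans h_net.le
  have h_split := setOf_forall_le_dist_subset_union f (fun t ↦ f (t + τ)) (Icc ξ (ξ + l)) s
    (by linarith [min_le_right 1 (δ / 2)] : c + δ / 2 ≤ δ)
  refine ENNReal.toReal_le_of_le_ofReal (by positivity) ?_
  rw [ENNReal.ofReal_add (by positivity) (by positivity)]
  exact (measure_mono h_split).trans ((measure_union_le _ _).trans (add_le_add h_close h_far))

theorem stmt9 {U : Type*} [MetricSpace U] [CompleteSpace U]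
    (f : ℝ → U) (hf : WAP f) :
    ∀ ε > (0 : ℝ), ∀ δ > (0 : ℝ), ∃ l > (0 : ℝ), ∃ s : Finset U, s.Nonempty ∧
      (⨆ ξ : ℝ,
          (volume {t ∈ Set.Icc ξ (ξ + l) | ∀ x ∈ s, δ ≤ dist (f t) x}).toReal)
        < ε * l :=
  stmt9_general f hf
end
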